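/- Let T be a tree and D a set of guards. If (T, D) has an arena X with ctd(X) = t, then t_T(D) ≤ t. -/

import Mathlib

/-- Attacker wins within `t` turns in the mobile domination game. -/
def AttackerWinsIn {V : Type*} [DecidableEq V] (G : SimpleGraph V) :
    ℕ → Finset V → Prop
  | 0, _ => False
  | (t + 1), D => ∃ v, v ∉ D ∧
      ∀ u ∈ D, G.Adj u v → AttackerWinsIn G t (insert v (D.erase u))

/-- `t_G(D)`, the minimum number of turns in which Attacker can force a win;
`⊤` iff `D` is an eternal dominating set. -/
noncomputable def gameValue {V : Type*} [DecidableEq V] (G : SimpleGraph V)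
    (D : Finset V) : ℕ∞ :=
  sInf {n : ℕ∞ | ∃ t : ℕ, n = (t : ℕ∞) ∧ AttackerWinsIn G t D}

/-- `TreedepthLE G k` : there is a rooted forest of height at most `k` (encoded by
assigning to each vertex its root-to-vertex path, ancestor‑descendant = prefix) in
which the endpoints of every edge of `G` are in ancestor-descendant relation. -/
def TreedepthLE {W : Type*} (G : SimpleGraph W) (k : ℕ) : Prop :=
  ∃ ι : W → List ℕ, Function.Injective ι ∧
    (∀ v, 1 ≤ (ι v).length ∧ (ι v).length ≤ k) ∧
    (∀ u v, G.Adj u v → ((ι u <+: ι v) ∨ (ι v <+: ι u)))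

/-- The treedepth of a graph: the minimum height of such a rooted forest. -/
noncomputable def treedepth {W : Type*} (G : SimpleGraph W) : ℕ :=
  sInf {k | TreedepthLE G k}

/-- `X` is an arena of `(T, D)` : a subtree (nonempty connected induced subgraph)
of `T` such that (1) `X ∩ D` and `X \ D` are independent; (2) every guarded vertex
of `X` has degree exactly 2 in `X`; (3) no unguarded vertex of `X` has a guarded
neighbor outside `X`. -/
def IsArena {V : Type*} [DecidableEq V] (T : SimpleGraph V) [DecidableRel T.Adj]
    (D X : Finset V) : Prop :=
  (T.induce (X : Set V)).Connected ∧
  (∀ u ∈ X, ∀ v ∈ X, u ∈ D → v ∈ D → ¬ T.Adj u v) ∧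
  (∀ u ∈ X, ∀ v ∈ X, u ∉ D → v ∉ D → ¬ T.Adj u v) ∧
  (∀ u ∈ X, u ∈ D → (X.filter fun w => T.Adj u w).card = 2) ∧
  (∀ v ∈ X, v ∉ D → ∀ u, T.Adj v u → u ∈ D → u ∈ X)

/-- The contracted tree of an arena `X` : on the unguarded vertices of `X`, each
guarded vertex of `X` is replaced by an edge between its two neighbors in `X`. -/
def contractedTree {V : Type*} [DecidableEq V] (T : SimpleGraph V)
    (D X : Finset V) : SimpleGraph {v // v ∈ X \ D} :=
  SimpleGraph.fromRel fun a b =>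
    T.Adj a.1 b.1 ∨ ∃ g ∈ X ∩ D, T.Adj a.1 g ∧ T.Adj g b.1

/-- The contracted treedepth of an arena. -/
noncomputable def ctd {V : Type*} [DecidableEq V] (T : SimpleGraph V)
    (D X : Finset V) : ℕ :=
  treedepth (contractedTree T D X)

/-!
Attacker attacks a root `r` of an optimal elimination forest of the contracted tree. The guard
`u` that answers has a second neighbour `w` in the arena; the component of `w` in `X - {r, u}`,
with the new guard set, satisfies conditions (1)–(3) of an arena again (a guard of it adjacent
to `r` would close a cycle through `u` and `w`), and its unguarded vertices are connected to `r`
in the old contracted tree, hence lie strictly below `r`. So the treedepth drops at every turn,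
and a contracted tree of depth `0` has no vertex left.
-/

open Finset SimpleGraph

namespace SimpleGraph

variable {V : Type*} {G : SimpleGraph V}

lemma IsAcyclic.eq_of_adj_of_notMem_support (hG : G.IsAcyclic) {v a b : V}
    (ha : G.Adj v a) (hb : G.Adj v b) (p : G.Walk a b) (hv : v ∉ p.support) : a = b := by
  have h := (isBridge_iff_forall_walk_mem_edges.mp (isAcyclic_iff_forall_adj_isBridge.mp hG ha))
    (Walk.cons hb p.reverse)
  rw [Walk.edges_cons, List.mem_cons] at h
  rcases h with h | h
  · exact Sym2.congr_right.mp h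
  · have := p.reverse.fst_mem_support_of_mem_edges h
    rw [Walk.support_reverse, List.mem_reverse] at this
    exact absurd this hv

end SimpleGraph

section Labeling

variable {W : Type*} {H : SimpleGraph W} {ι : W → List ℕ}

lemma prefix_of_reachable (hι : ∀ a b, H.Adj a b → ι a <+: ι b ∨ ι b <+: ι a) {r z : W}
    (hmin : ∀ y, (ι r).length ≤ (ι y).length) (h : H.Reachable r z) : ι r <+: ι z := by
  rw [reachable_iff_reflTransGen] at h
  induction h with
  | refl => exact List.prefix_rfl
  | tail _ hbc ih =>
    rcases hι _ _ hbc with h | h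
    · exact ih.trans h
    · exact List.prefix_of_prefix_length_le ih h (hmin _)

lemma treedepthLE_of_forall_prefix {t : ℕ} (hinj : Function.Injective ι)
    (hlen : ∀ v, (ι v).length ≤ t + 1) (hι : ∀ a b, H.Adj a b → ι a <+: ι b ∨ ι b <+: ι a)
    {p : List ℕ} (hp : p ≠ []) (hpre : ∀ v, p <+: ι v) (hne : ∀ v, ι v ≠ p) :
    TreedepthLE H t := by
  refine ⟨fun v => (ι v).drop p.length, fun a b hab => hinj ?_, fun v => ?_, fun a b hab => ?_⟩
  · calc ι a = p ++ (ι a).drop p.length := (List.prefix_iff_eq_append.mp (hpre a)).symm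
      _ = p ++ (ι b).drop p.length := congrArg (p ++ ·) hab
      _ = ι b := List.prefix_iff_eq_append.mp (hpre b)
  · have hlt : p.length < (ι v).length :=
      (hpre v).length_le.lt_of_ne fun h => hne v ((hpre v).eq_of_length h).symm
    have := List.length_pos_of_ne_nil hp
    have := hlen v
    simp only [List.length_drop]
    omega
  · exact (hι a b hab).imp (·.drop _) (·.drop _)

lemma treedepthLE_card [Fintype W] : TreedepthLE H (Fintype.card W) := by
  let e := Fintype.equivFin W
  refine ⟨fun z => List.replicate (e z + 1) 0, fun a b hab => e.injective (Fin.ext ?_),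
    fun v => ?_, fun a b _ => ?_⟩
  · simpa using congrArg List.length hab
  · simp only [List.length_replicate]
    exact ⟨by omega, (e v).is_lt⟩
  · exact (le_total (e a : ℕ) (e b)).imp (fun h => by simp [List.prefix_replicate_iff, h])
      (fun h => by simp [List.prefix_replicate_iff, h])

lemma treedepthLE_treedepth [Finite W] : TreedepthLE H (treedepth H) :=
  have := Fintype.ofFinite W
  Nat.sInf_mem (s := {k | TreedepthLE H k}) ⟨_, treedepthLE_card⟩

end Labeling

lemma gameValue_le_of_attackerWinsIn {V : Type*} [DecidableEq V] {G : SimpleGraph V}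
    {D : Finset V} {t : ℕ} (h : AttackerWinsIn G t D) : gameValue G D ≤ t :=
  sInf_le ⟨t, rfl, h⟩

section Arena

variable {V : Type*} {T : SimpleGraph V}

noncomputable def componentIn (T : SimpleGraph V) (S : Finset V) (w : V) : Finset V := by
  classical exact S.filter (Relation.ReflTransGen (fun a b => T.Adj a b ∧ a ∈ S ∧ b ∈ S) w)

lemma mem_componentIn {S : Finset V} {w z : V} :
    z ∈ componentIn T S w ↔
      z ∈ S ∧ Relation.ReflTransGen (fun a b => T.Adj a b ∧ a ∈ S ∧ b ∈ S) w z := by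
  classical simp [componentIn]

lemma componentIn_subset {S : Finset V} {w : V} : componentIn T S w ⊆ S :=
  fun _ hz => (mem_componentIn.mp hz).1

lemma mem_componentIn_self {S : Finset V} {w : V} (hw : w ∈ S) : w ∈ componentIn T S w :=
  mem_componentIn.mpr ⟨hw, .refl⟩

lemma mem_componentIn_of_adj {S : Finset V} {w z c : V} (hz : z ∈ componentIn T S w)
    (hc : c ∈ S) (hzc : T.Adj z c) : c ∈ componentIn T S w :=
  have hz := mem_componentIn.mp hz
  mem_componentIn.mpr ⟨hc, hz.2.tail ⟨hzc, hz.1, hc⟩⟩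

lemma exists_walk_of_mem_componentIn {S : Finset V} {w z : V} (hw : w ∈ S)
    (hz : z ∈ componentIn T S w) : ∃ q : T.Walk w z, ∀ x ∈ q.support, x ∈ S := by
  induction (mem_componentIn.mp hz).2 with
  | refl => exact ⟨.nil, by simpa using hw⟩
  | @tail b c _ hbc ih =>
    obtain ⟨q, hq⟩ := ih (mem_componentIn.mpr ⟨hbc.2.1, by assumption⟩)
    refine ⟨q.concat hbc.1, fun x hx => ?_⟩
    rw [Walk.support_concat, List.mem_append, List.mem_singleton] at hx
    exact hx.elim (hq x) (· ▸ hbc.2.2)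

lemma SimpleGraph.IsAcyclic.not_adj_of_mem_componentIn (hT : T.IsAcyclic) {S : Finset V}
    {r u w p : V} (hur : T.Adj u r) (huw : T.Adj u w) (hr : r ∉ S) (hw : w ∈ S)
    (hp : p ∈ componentIn T S w) (hpu : p ≠ u) : ¬ T.Adj p r := by
  intro hpr
  obtain ⟨q, hq⟩ := exists_walk_of_mem_componentIn hw hp
  refine hpu (hT.eq_of_adj_of_notMem_support hur.symm hpr.symm (q.cons huw) ?_).symm
  rw [Walk.support_cons, List.mem_cons]
  rintro (h | h)
  · exact hur.ne h.symm
  · exact hr (hq r h)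

structure IsPreArena (T : SimpleGraph V) [DecidableRel T.Adj] (D X : Finset V) : Prop where
  guarded_independent : ∀ u ∈ X, ∀ v ∈ X, u ∈ D → v ∈ D → ¬ T.Adj u v
  unguarded_independent : ∀ u ∈ X, ∀ v ∈ X, u ∉ D → v ∉ D → ¬ T.Adj u v
  card_guarded_neighbors : ∀ u ∈ X, u ∈ D → (X.filter fun w => T.Adj u w).card = 2
  guarded_neighbor_mem : ∀ v ∈ X, v ∉ D → ∀ u, T.Adj v u → u ∈ D → u ∈ X

variable {D X : Finset V}

lemma IsPreArena.exists_adj_ne [DecidableRel T.Adj] (hX : IsPreArena T D X) {u : V}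
    (hu : u ∈ X) (huD : u ∈ D) (v : V) : ∃ w ∈ X, T.Adj u w ∧ w ≠ v := by
  obtain ⟨w, hw, hwv⟩ :=
    exists_mem_ne (by rw [hX.card_guarded_neighbors u hu huD]; norm_num) v
  rw [mem_filter] at hw
  exact ⟨w, hw.1, hw.2, hwv⟩

variable [DecidableEq V]

lemma ne_ne_mem_of_mem_componentIn {r u w z : V}
    (hz : z ∈ componentIn T ((X.erase r).erase u) w) : z ≠ r ∧ z ≠ u ∧ z ∈ X := by
  have := componentIn_subset hz
  simp only [mem_erase] at this
  exact ⟨this.2.1, this.1, this.2.2⟩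

lemma mem_insert_erase_iff_of_mem_componentIn {r u w z : V}
    (hz : z ∈ componentIn T ((X.erase r).erase u) w) : z ∈ insert r (D.erase u) ↔ z ∈ D := by
  obtain ⟨hzr, hzu, -⟩ := ne_ne_mem_of_mem_componentIn hz
  simp [hzr, hzu]

lemma contractedTree_adj_of_adj_adj {a b : {v // v ∈ X \ D}} (hab : a ≠ b) {g : V}
    (hg : g ∈ X ∩ D) (hag : T.Adj a g) (hgb : T.Adj g b) : (contractedTree T D X).Adj a b := by
  rw [contractedTree, fromRel_adj]
  exact ⟨hab, Or.inl (Or.inr ⟨g, hg, hag, hgb⟩)⟩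

lemma contractedTree_adj_mono {D' X' : Finset V} (hX : X' ⊆ X) (hD : X' ∩ D' ⊆ D)
    {a b : {v // v ∈ X' \ D'}} (ha : a.1 ∈ X \ D) (hb : b.1 ∈ X \ D)
    (h : (contractedTree T D' X').Adj a b) : (contractedTree T D X).Adj ⟨a, ha⟩ ⟨b, hb⟩ := by
  rw [contractedTree, fromRel_adj] at h ⊢
  have hg : ∀ g ∈ X' ∩ D', g ∈ X ∩ D := fun g hg =>
    mem_inter.mpr ⟨hX (mem_inter.mp hg).1, hD hg⟩
  refine ⟨fun e => h.1 (Subtype.ext (congrArg Subtype.val e :)), ?_⟩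
  exact h.2.imp (Or.imp_right fun ⟨g, hg', hag⟩ => ⟨g, hg g hg', hag⟩)
    (Or.imp_right fun ⟨g, hg', hbg⟩ => ⟨g, hg g hg', hbg⟩)

lemma contractedTree_reachable_of_reflTransGen
    (hD : ∀ u ∈ X, ∀ v ∈ X, u ∈ D → v ∈ D → ¬ T.Adj u v) {a z : V} (ha : a ∈ X \ D)
    (h : Relation.ReflTransGen (fun x y => T.Adj x y ∧ x ∈ X ∧ y ∈ X) a z) :
    ∃ y, ∃ hy : y ∈ X \ D, (contractedTree T D X).Reachable ⟨a, ha⟩ ⟨y, hy⟩ ∧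
      (y = z ∨ T.Adj y z ∧ z ∈ D) := by
  induction h with
  | refl => exact ⟨a, ha, .refl _, .inl rfl⟩
  | @tail b c _ hbc ih =>
    obtain ⟨hbc, hbX, hcX⟩ := hbc
    obtain ⟨y, hy, hay, rfl | ⟨hyb, hbD⟩⟩ := ih
    · by_cases hcD : c ∈ D
      · exact ⟨y, hy, hay, .inr ⟨hbc, hcD⟩⟩
      · refine ⟨c, mem_sdiff.mpr ⟨hcX, hcD⟩, hay.trans (Adj.reachable ?_), .inl rfl⟩
        rw [contractedTree, fromRel_adj]
        exact ⟨fun e => hbc.ne (congrArg Subtype.val e), .inl (.inl hbc)⟩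
    · have hcD : c ∉ D := fun hcD => hD b hbX c hcX hbD hcD hbc
      by_cases hyc : y = c
      · exact ⟨y, hy, hay, .inl hyc⟩
      · refine ⟨c, mem_sdiff.mpr ⟨hcX, hcD⟩, hay.trans (Adj.reachable ?_), .inl rfl⟩
        exact contractedTree_adj_of_adj_adj (fun e => hyc (congrArg Subtype.val e))
          (mem_inter.mpr ⟨hbX, hbD⟩) hyb hbc

lemma contractedTree_reachable_of_mem_componentIn
    (hD : ∀ u ∈ X, ∀ v ∈ X, u ∈ D → v ∈ D → ¬ T.Adj u v) {r u w z : V} (hr : r ∈ X \ D)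
    (hu : u ∈ X ∩ D) (hur : T.Adj u r) (hw : w ∈ X \ D) (huw : T.Adj u w) (hwr : w ≠ r)
    {S : Finset V} (hS : S ⊆ X) (hz : z ∈ X \ D) (hzS : z ∈ componentIn T S w) :
    (contractedTree T D X).Reachable ⟨r, hr⟩ ⟨z, hz⟩ := by
  have hwz := Relation.ReflTransGen.mono (p := fun x y => T.Adj x y ∧ x ∈ X ∧ y ∈ X)
    (fun _ _ h => ⟨h.1, hS h.2.1, hS h.2.2⟩) _ _ (mem_componentIn.mp hzS).2
  obtain ⟨y, hy, hwy, rfl | ⟨-, hzD⟩⟩ := contractedTree_reachable_of_reflTransGen hD hw hwz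
  · exact (contractedTree_adj_of_adj_adj (fun e => hwr (congrArg Subtype.val e).symm) hu
      hur.symm huw).reachable.trans hwy
  · exact absurd hzD (mem_sdiff.mp hz).2

lemma treedepthLE_contractedTree_move
    (hD : ∀ u ∈ X, ∀ v ∈ X, u ∈ D → v ∈ D → ¬ T.Adj u v) {t : ℕ}
    {ι : {v // v ∈ X \ D} → List ℕ} (hinj : Function.Injective ι)
    (hlen : ∀ v, 1 ≤ (ι v).length ∧ (ι v).length ≤ t + 1)
    (hι : ∀ a b, (contractedTree T D X).Adj a b → ι a <+: ι b ∨ ι b <+: ι a)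
    {r u w : V} (hr : r ∈ X \ D) (hmin : ∀ v, (ι ⟨r, hr⟩).length ≤ (ι v).length)
    (hu : u ∈ X ∩ D) (hur : T.Adj u r) (hw : w ∈ X \ D) (huw : T.Adj u w) (hwr : w ≠ r) :
    TreedepthLE (contractedTree T (insert r (D.erase u)) (componentIn T ((X.erase r).erase u) w))
      t := by
  set D' := insert r (D.erase u)
  set X' := componentIn T ((X.erase r).erase u) w
  have hX'X : X' ⊆ X := fun v hv => (ne_ne_mem_of_mem_componentIn hv).2.2
  have hsub (v : V) (hv : v ∈ X' \ D') : v ∈ X \ D :=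
    have hv := mem_sdiff.mp hv
    mem_sdiff.mpr ⟨hX'X hv.1, (mem_insert_erase_iff_of_mem_componentIn hv.1).not.mp hv.2⟩
  have hbelow (v : {v // v ∈ X' \ D'}) : ι ⟨r, hr⟩ <+: ι ⟨v, hsub v v.2⟩ :=
    prefix_of_reachable hι hmin <| contractedTree_reachable_of_mem_componentIn hD hr hu hur hw
      huw hwr ((erase_subset _ _).trans (erase_subset _ _)) _ (mem_sdiff.mp v.2).1
  refine treedepthLE_of_forall_prefix (ι := fun v : {v // v ∈ X' \ D'} => ι ⟨v, hsub v v.2⟩)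
    (fun a b h => Subtype.ext (congrArg Subtype.val (hinj h) :)) (fun v => (hlen _).2)
    (fun a b h => hι _ _ (contractedTree_adj_mono hX'X (fun v hv =>
      (mem_insert_erase_iff_of_mem_componentIn (mem_inter.mp hv).1).mp (mem_inter.mp hv).2)
      _ _ h))
    (List.ne_nil_of_length_pos (hlen _).1) hbelow fun v h => ?_
  have hvr : v.1 = r := congrArg Subtype.val (hinj h)
  exact (mem_sdiff.mp v.2).2 (hvr ▸ mem_insert_self _ _)

variable [DecidableRel T.Adj]

lemma IsArena.isPreArena (h : IsArena T D X) : IsPreArena T D X :=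
  ⟨h.2.1, h.2.2.1, h.2.2.2.1, h.2.2.2.2⟩

lemma IsPreArena.sdiff_nonempty (hX : IsPreArena T D X) (hne : X.Nonempty) :
    (X \ D).Nonempty := by
  obtain ⟨x, hx⟩ := hne
  by_cases hxD : x ∈ D
  · obtain ⟨w, hw, hxw, -⟩ := hX.exists_adj_ne hx hxD x
    exact ⟨w, mem_sdiff.mpr ⟨hw, fun hwD => hX.guarded_independent x hx w hw hxD hwD hxw⟩⟩
  · exact ⟨x, mem_sdiff.mpr ⟨hx, hxD⟩⟩

theorem IsPreArena.move (hT : T.IsAcyclic) (hX : IsPreArena T D X) {r u w : V}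
    (hr : r ∈ X \ D) (hu : u ∈ D) (hur : T.Adj u r) (hw : w ∈ X) (huw : T.Adj u w)
    (hwr : w ≠ r) :
    IsPreArena T (insert r (D.erase u)) (componentIn T ((X.erase r).erase u) w) := by
  set Y := (X.erase r).erase u
  obtain ⟨hrX, hrD⟩ := mem_sdiff.mp hr
  have hwY : w ∈ Y := mem_erase.mpr ⟨huw.ne', mem_erase.mpr ⟨hwr, hw⟩⟩
  have hY : ∀ {z}, z ∈ componentIn T Y w → z ≠ r ∧ z ≠ u ∧ z ∈ X :=
    ne_ne_mem_of_mem_componentIn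
  have hD' : ∀ {z}, z ∈ componentIn T Y w → (z ∈ insert r (D.erase u) ↔ z ∈ D) :=
    mem_insert_erase_iff_of_mem_componentIn
  have hmem : ∀ {z c}, z ∈ componentIn T Y w → c ∈ X → c ≠ r → c ≠ u → T.Adj z c →
      c ∈ componentIn T Y w := fun hz hc hcr hcu hzc =>
    mem_componentIn_of_adj hz (mem_erase.mpr ⟨hcu, mem_erase.mpr ⟨hcr, hc⟩⟩) hzc
  constructor
  · intro a ha b hb haD hbD
    exact hX.guarded_independent a (hY ha).2.2 b (hY hb).2.2 ((hD' ha).mp haD) ((hD' hb).mp hbD)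
  · intro a ha b hb haD hbD
    exact hX.unguarded_independent a (hY ha).2.2 b (hY hb).2.2 (by rwa [← hD' ha])
      (by rwa [← hD' hb])
  · intro p hp hpD
    rw [hD' hp] at hpD
    rw [← hX.card_guarded_neighbors p (hY hp).2.2 hpD]
    congr 1
    ext c
    simp only [mem_filter]
    refine ⟨fun ⟨hc, hpc⟩ => ⟨(hY hc).2.2, hpc⟩, fun ⟨hc, hpc⟩ => ⟨hmem hp hc ?_ ?_ hpc, hpc⟩⟩
    · rintro rfl
      exact hT.not_adj_of_mem_componentIn hur huw (by simp [Y]) hwY hp (hY hp).2.1 hpc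
    · rintro rfl
      exact hX.guarded_independent p (hY hp).2.2 c hc hpD hu hpc
  · intro z hz hzD p hzp hpD
    rw [hD' hz] at hzD
    rcases mem_insert.mp hpD with rfl | hpD
    · exact absurd hzp (hX.unguarded_independent z (hY hz).2.2 p hrX hzD hrD)
    · obtain ⟨hpu, hpD⟩ := mem_erase.mp hpD
      exact hmem hz (hX.guarded_neighbor_mem z (hY hz).2.2 hzD p hzp hpD)
        (fun e => hrD (e ▸ hpD)) hpu hzp

theorem attackerWinsIn_of_isPreArena (hT : T.IsAcyclic) {t : ℕ} :
    ∀ {D X : Finset V}, IsPreArena T D X → (X \ D).Nonempty →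
      TreedepthLE (contractedTree T D X) t → AttackerWinsIn T t D := by
  induction t with
  | zero =>
    rintro D X - ⟨z, hz⟩ ⟨ι, -, hlen, -⟩
    exact absurd (hlen ⟨z, hz⟩) (by omega)
  | succ t ih =>
    rintro D X hX ⟨z, hz⟩ ⟨ι, hinj, hlen, hι⟩
    have : Nonempty {v // v ∈ X \ D} := ⟨⟨z, hz⟩⟩
    obtain ⟨⟨r, hr⟩, hmin⟩ := Finite.exists_min fun v => (ι v).length
    obtain ⟨hrX, hrD⟩ := mem_sdiff.mp hr
    refine ⟨r, hrD, fun u hu hur => ?_⟩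
    have huX := hX.guarded_neighbor_mem r hrX hrD u hur.symm hu
    obtain ⟨w, hw, huw, hwr⟩ := hX.exists_adj_ne huX hu r
    have hwD : w ∉ D := fun hwD => hX.guarded_independent u huX w hw hu hwD huw
    have hwX' : w ∈ componentIn T ((X.erase r).erase u) w :=
      mem_componentIn_self (mem_erase.mpr ⟨huw.ne', mem_erase.mpr ⟨hwr, hw⟩⟩)
    refine ih (hX.move hT hr hu hur hw huw hwr)
      ⟨w, mem_sdiff.mpr ⟨hwX', (mem_insert_erase_iff_of_mem_componentIn hwX').not.mpr hwD⟩⟩ ?_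
    exact treedepthLE_contractedTree_move hX.guarded_independent hinj hlen hι hr hmin
      (mem_inter.mpr ⟨huX, hu⟩) hur (mem_sdiff.mpr ⟨hw, hwD⟩) huw hwr

end Arena

theorem stmt8_general {V : Type*} [DecidableEq V] (T : SimpleGraph V)
    [DecidableRel T.Adj] (hT : T.IsTree) (D X : Finset V) (t : ℕ)
    (hX : IsArena T D X) (hctd : ctd T D X = t) :
    gameValue T D ≤ (t : ℕ∞) := by
  obtain ⟨⟨x, hx⟩⟩ := hX.1.nonempty
  refine gameValue_le_of_attackerWinsIn (attackerWinsIn_of_isPreArena hT.isAcyclic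
    hX.isPreArena (hX.isPreArena.sdiff_nonempty ⟨x, hx⟩) ?_)
  rw [← hctd]
  exact treedepthLE_treedepth

/-- If `(T, D)` has an arena `X` with `ctd(X) = t`, then `t_T(D) ≤ t`. -/
theorem stmt8 {V : Type*} [Fintype V] [DecidableEq V] (T : SimpleGraph V)
    [DecidableRel T.Adj] (hT : T.IsTree) (D X : Finset V) (t : ℕ)
    (hX : IsArena T D X) (hctd : ctd T D X = t) :
    gameValue T D ≤ (t : ℕ∞) :=
  stmt8_general T hT D X t hX hctd
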